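/- Let $M$ be an $R$-module, $T$ a closed subset of $Spec(M)$ in the Zariski topology, $Q = (\cap_{P\in T}P : M)M$, and $\bar{M} = M/Q$. Then the graph $AG(\bar{M})^*$ is isomorphic to a subgraph of $G(\tau_T)$: every vertex $\bar{N}$ of $AG(\bar{M})^*$ gives a vertex $N$ of $G(\tau_T)$, and adjacency in $AG(\bar{M})^*$ implies adjacency in $G(\tau_T)$. -/

import Mathlib

open Submodule

section Defs
variable (R : Type*) [CommRing R] {M : Type*} [AddCommGroup M] [Module R M]

/-- `(N : M)`, the colon ideal of a submodule with the whole module. -/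
def colonTop (N : Submodule R M) : Ideal R := N.colon ⊤

variable {R}

/-- A prime submodule. -/
def IsPrimeSubmodule (P : Submodule R M) : Prop :=
  P ≠ ⊤ ∧ ∀ (r : R) (m : M), r • m ∈ P → r ∈ colonTop R P ∨ m ∈ P

/-- The prime spectrum of a module, as a set of submodules. -/
def specSet (R : Type*) [CommRing R] (M : Type*) [AddCommGroup M] [Module R M] :
    Set (Submodule R M) := {P | IsPrimeSubmodule P}

/-- `V(N)`. -/
def Vset (N : Submodule R M) : Set (Submodule R M) :=
  {P | IsPrimeSubmodule P ∧ colonTop R N ≤ colonTop R P}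

/-- `V^*(N)`. -/
def VstarSet (N : Submodule R M) : Set (Submodule R M) :=
  {P | IsPrimeSubmodule P ∧ N ≤ P}

/-- The product `NK = (N:M)(K:M)M` of two submodules. -/
def prodSub (N K : Submodule R M) : Submodule R M :=
  (colonTop R N * colonTop R K) • (⊤ : Submodule R M)

/-- The prime radical of a submodule. -/
def radicalSub (N : Submodule R M) : Submodule R M :=
  sInf {P | IsPrimeSubmodule P ∧ N ≤ P}

/-- Adjacency in the Zariski topology-graph `G(τ_T)`. -/
def ZAdj (T : Set (Submodule R M)) (N L : Submodule R M) : Prop :=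
  N ≠ L ∧ N ≠ ⊤ ∧ L ≠ ⊤ ∧ Vset N ∪ Vset L = T ∧ Vset N ≠ T ∧ Vset L ≠ T

/-- Vertices of the Zariski topology-graph `G(τ_T)`. -/
def ZVertex (T : Set (Submodule R M)) (N : Submodule R M) : Prop :=
  ∃ K, ZAdj T N K

/-- The Zariski topology-graph `G(τ_T)` as a simple graph on its vertex set. -/
def ZGraph (T : Set (Submodule R M)) : SimpleGraph {N : Submodule R M // ZVertex T N} where
  Adj a b := ZAdj T a.1 b.1
  symm := ⟨by
    rintro a b ⟨h1, h2, h3, h4, h5, h6⟩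
    exact ⟨h1.symm, h3, h2, by rwa [Set.union_comm], h6, h5⟩⟩
  loopless := ⟨by rintro a ⟨h1, -⟩; exact h1 rfl⟩

end Defs
section Extra
variable {R : Type*} [CommRing R] {M : Type*} [AddCommGroup M] [Module R M]

/-- Prime submodule of a submodule `W`, internal version (i.e. a prime submodule of the
module `W`). -/
def IsPrimeIn (W P : Submodule R M) : Prop :=
  P < W ∧ ∀ (r : R) (m : M), m ∈ W → r • m ∈ P → (∀ x ∈ W, r • x ∈ P) ∨ m ∈ P

/-- The prime radical of `N` computed inside the submodule `W`. -/
def radicalIn (W N : Submodule R M) : Submodule R M :=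
  sInf {P | IsPrimeIn W P ∧ N ≤ P} ⊓ W

/-- Vertices of the graph `AG(M)^*`. -/
def AGstarVertex (N : Submodule R M) : Prop :=
  N ≠ ⊤ ∧ colonTop R N ≠ Module.annihilator R M ∧
    ∃ K, K ≠ ⊤ ∧ colonTop R K ≠ Module.annihilator R M ∧ prodSub N K = ⊥

/-- Adjacency in the graph `AG(M)^*`. -/
def AGstarAdj (N L : Submodule R M) : Prop :=
  N ≠ L ∧ AGstarVertex N ∧ AGstarVertex L ∧ prodSub N L = ⊥

/-- The clique number of a graph, valued in `ℕ∞`. -/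
noncomputable def cliqueNumE {V : Type*} (G : SimpleGraph V) : ℕ∞ :=
  ⨆ n ∈ {n : ℕ | ∃ s, G.IsNClique n s}, (n : ℕ∞)

end Extra

/-! A prime `P ∈ T` contains `Q`, so a product `(N:M)(K:M)` killing `M/Q` lies in the prime ideal
`(P:M)`, which forces `P ∈ V(N) ∪ V(K)`; conversely `V(N) = T` would give `(N:M) ≤ (∩T : M) = (Q:M)`,
excluded for vertices of `AG(M/Q)^*`. -/

section

variable {R : Type*} [CommRing R] {M : Type*} [AddCommGroup M] [Module R M]

section Colon

theorem mem_colonTop {N : Submodule R M} {r : R} : r ∈ colonTop R N ↔ ∀ x, r • x ∈ N := by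
  simp [colonTop, mem_colon]

theorem colonTop_mono {N K : Submodule R M} (h : N ≤ K) : colonTop R N ≤ colonTop R K :=
  colon_mono h le_rfl

theorem smul_top_le_iff_le_colonTop {I : Ideal R} {N : Submodule R M} :
    I • (⊤ : Submodule R M) ≤ N ↔ I ≤ colonTop R N := by
  rw [smul_le]
  simp [SetLike.le_def, mem_colonTop]

theorem colonTop_colonTop_smul_top (N : Submodule R M) :
    colonTop R (colonTop R N • (⊤ : Submodule R M)) = colonTop R N :=
  le_antisymm (colonTop_mono (smul_top_le_iff_le_colonTop.mpr le_rfl))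
    (smul_top_le_iff_le_colonTop.mp le_rfl)

theorem le_colonTop_sInf {T : Set (Submodule R M)} {I : Ideal R}
    (h : ∀ P ∈ T, I ≤ colonTop R P) : I ≤ colonTop R (sInf T) :=
  smul_top_le_iff_le_colonTop.mp <| le_sInf fun P hP => smul_top_le_iff_le_colonTop.mpr (h P hP)

theorem colonTop_bot : colonTop R (⊥ : Submodule R M) = Module.annihilator R M := by
  ext r
  simp [mem_colonTop, Module.mem_annihilator]

theorem prodSub_eq_bot_iff {N K : Submodule R M} :
    prodSub N K = ⊥ ↔ colonTop R N * colonTop R K ≤ Module.annihilator R M := by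
  rw [prodSub, ← le_bot_iff, smul_top_le_iff_le_colonTop, colonTop_bot]

theorem IsPrimeSubmodule.isPrime_colonTop {P : Submodule R M} (hP : IsPrimeSubmodule P) :
    (colonTop R P).IsPrime where
  ne_top' h := hP.1 <| by simpa [colonTop, colon_eq_top_iff_subset] using h
  mem_or_mem' {a b} hab := or_iff_not_imp_left.mpr fun ha => mem_colonTop.mpr fun x =>
    (hP.2 a (b • x) (by simpa [mul_smul] using mem_colonTop.mp hab x)).resolve_left ha

end Colon

section Zariski

theorem Vset_union_Vset_eq {N K L : Submodule R M} (hN : colonTop R L ≤ colonTop R N)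
    (hK : colonTop R L ≤ colonTop R K) (hNK : colonTop R N * colonTop R K ≤ colonTop R L) :
    Vset N ∪ Vset K = Vset L := by
  ext P
  constructor
  · rintro (⟨hP, hNP⟩ | ⟨hP, hKP⟩)
    exacts [⟨hP, hN.trans hNP⟩, ⟨hP, hK.trans hKP⟩]
  · rintro ⟨hP, hLP⟩
    exact (hP.isPrime_colonTop.mul_le.mp (hNK.trans hLP)).imp (⟨hP, ·⟩) (⟨hP, ·⟩)

theorem Vset_ne_of_colonTop_sInf_lt {T : Set (Submodule R M)} {N : Submodule R M}
    (h : colonTop R (sInf T) < colonTop R N) : Vset N ≠ T := by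
  rintro rfl
  exact h.not_ge (le_colonTop_sInf fun P hP => hP.2)

theorem zAdj_of_colonTop_mul_le {T : Set (Submodule R M)} (hclosed : T = Vset (sInf T))
    {N K : Submodule R M} (hN : N ≠ ⊤) (hK : K ≠ ⊤)
    (hTN : colonTop R (sInf T) < colonTop R N) (hTK : colonTop R (sInf T) < colonTop R K)
    (hNK : colonTop R N * colonTop R K ≤ colonTop R (sInf T)) : ZAdj T N K := by
  have hunion : Vset N ∪ Vset K = T := hclosed ▸ Vset_union_Vset_eq hTN.le hTK.le hNK
  have hVN := Vset_ne_of_colonTop_sInf_lt hTN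
  refine ⟨?_, hN, hK, hunion, hVN, Vset_ne_of_colonTop_sInf_lt hTK⟩
  rintro rfl
  exact hVN (by rwa [Set.union_self] at hunion)

end Zariski

section Quotient

variable {Q N : Submodule R M}

theorem ne_top_of_map_mkQ_ne_top (h : N.map Q.mkQ ≠ ⊤) : N ≠ ⊤ := by
  rintro rfl
  exact h (by rw [Submodule.map_top, range_mkQ])

theorem mkQ_mem_map_mkQ_iff (hQN : Q ≤ N) (x : M) : Q.mkQ x ∈ N.map Q.mkQ ↔ x ∈ N := by
  rw [← mem_comap, comap_map_mkQ, sup_eq_right.mpr hQN]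

theorem colonTop_map_mkQ (hQN : Q ≤ N) : colonTop R (N.map Q.mkQ) = colonTop R N := by
  ext r
  simp only [mem_colonTop, Q.mkQ_surjective.forall, ← map_smul, mkQ_mem_map_mkQ_iff hQN]

theorem exists_le_map_mkQ_eq (K' : Submodule R (M ⧸ Q)) : ∃ K, Q ≤ K ∧ K.map Q.mkQ = K' :=
  ⟨K'.comap Q.mkQ, le_comap_mkQ Q K', map_comap_eq_of_surjective Q.mkQ_surjective K'⟩

theorem colonTop_lt_of_colonTop_map_mkQ_ne (hQN : Q ≤ N)
    (h : colonTop R (N.map Q.mkQ) ≠ Module.annihilator R (M ⧸ Q)) :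
    colonTop R Q < colonTop R N := by
  rw [colonTop_map_mkQ hQN, annihilator_quotient] at h
  exact (colonTop_mono hQN).lt_of_ne' h

theorem colonTop_mul_le_of_prodSub_map_mkQ_eq_bot {K : Submodule R M} (hQN : Q ≤ N) (hQK : Q ≤ K)
    (h : prodSub (N.map Q.mkQ) (K.map Q.mkQ) = ⊥) :
    colonTop R N * colonTop R K ≤ colonTop R Q := by
  rwa [prodSub_eq_bot_iff, colonTop_map_mkQ hQN, colonTop_map_mkQ hQK, annihilator_quotient] at h

end Quotient

theorem zAdj_of_prodSub_map_mkQ_eq_bot {T : Set (Submodule R M)} (hclosed : T = Vset (sInf T))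
    {Q : Submodule R M} (hQ : Q = colonTop R (sInf T) • (⊤ : Submodule R M))
    {N K : Submodule R M} (hQN : Q ≤ N) (hQK : Q ≤ K)
    (hN : N.map Q.mkQ ≠ ⊤) (hK : K.map Q.mkQ ≠ ⊤)
    (hNc : colonTop R (N.map Q.mkQ) ≠ Module.annihilator R (M ⧸ Q))
    (hKc : colonTop R (K.map Q.mkQ) ≠ Module.annihilator R (M ⧸ Q))
    (hNK : prodSub (N.map Q.mkQ) (K.map Q.mkQ) = ⊥) : ZAdj T N K := by
  have hQT : colonTop R Q = colonTop R (sInf T) := hQ ▸ colonTop_colonTop_smul_top _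
  refine zAdj_of_colonTop_mul_le hclosed (ne_top_of_map_mkQ_ne_top hN)
    (ne_top_of_map_mkQ_ne_top hK) ?_ ?_ ?_ <;> rw [← hQT]
  exacts [colonTop_lt_of_colonTop_map_mkQ_ne hQN hNc, colonTop_lt_of_colonTop_map_mkQ_ne hQK hKc,
    colonTop_mul_le_of_prodSub_map_mkQ_eq_bot hQN hQK hNK]

end

theorem stmt16_general {R : Type*} [CommRing R] {M : Type*} [AddCommGroup M] [Module R M]
    (T : Set (Submodule R M))
    (hclosed : T = Vset (sInf T))
    (Q : Submodule R M) (hQ : Q = colonTop R (sInf T) • (⊤ : Submodule R M)) :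
    (∀ N : Submodule R M, Q ≤ N → AGstarVertex (Submodule.map Q.mkQ N) → ZVertex T N) ∧
      (∀ N L : Submodule R M, Q ≤ N → Q ≤ L →
        AGstarAdj (Submodule.map Q.mkQ N) (Submodule.map Q.mkQ L) → ZAdj T N L) := by
  refine ⟨?_, ?_⟩
  · rintro N hQN ⟨hN, hNc, K', hK', hK'c, hNK'⟩
    obtain ⟨K, hQK, rfl⟩ := exists_le_map_mkQ_eq K'
    exact ⟨K, zAdj_of_prodSub_map_mkQ_eq_bot hclosed hQ hQN hQK hN hK' hNc hK'c hNK'⟩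
  · rintro N L hQN hQL ⟨-, ⟨hN, hNc, -⟩, ⟨hL, hLc, -⟩, hNL⟩
    exact zAdj_of_prodSub_map_mkQ_eq_bot hclosed hQ hQN hQL hN hL hNc hLc hNL

/-- for `T` closed, `AG(M/Q)^*` is isomorphic to a subgraph of `G(τ_T)`:
vertices of `AG(M/Q)^*` (images of submodules `N ⊇ Q`) give vertices `N` of `G(τ_T)`,
and adjacency in `AG(M/Q)^*` implies adjacency in `G(τ_T)`. -/
theorem stmt16 {R : Type*} [CommRing R] {M : Type*} [AddCommGroup M] [Module R M]
    (T : Set (Submodule R M)) (hT : T.Nonempty) (hTs : T ⊆ specSet R M)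
    (hclosed : T = Vset (sInf T))
    (Q : Submodule R M) (hQ : Q = colonTop R (sInf T) • (⊤ : Submodule R M)) :
    (∀ N : Submodule R M, Q ≤ N → AGstarVertex (Submodule.map Q.mkQ N) → ZVertex T N) ∧
      (∀ N L : Submodule R M, Q ≤ N → Q ≤ L →
        AGstarAdj (Submodule.map Q.mkQ N) (Submodule.map Q.mkQ L) → ZAdj T N L) :=
  stmt16_general T hclosed Q hQ
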